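/- Let h(x) = (1−x)². The fixed points of h∘h in [0,1] are exactly {0, (3−√5)/2, 1}, and for x₀ ∈ [0, (3−√5)/2) the iterates (h∘h)ⁿ(x₀) converge to 0, while for x₀ ∈ ((3−√5)/2, 1] they converge to 1. -/

import Mathlib

/-!
With `φ`, `ψ` the golden ratio and its conjugate, `h (h x) - x = x (x - 1) (x - ψ²) (x - φ²)`, where
`ψ² = (3 - √5) / 2` is the fixed point of `h` in `[0, 1]` and `φ² > 1`. So `h ∘ h`, which maps
`[0, 1]` into itself, lies below the diagonal on `[0, ψ²]` and above it on `[ψ², 1]`. An orbit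
starting on either side is therefore monotone and bounded, and converges to a fixed point of
`h ∘ h` on the same side, which can only be `0`, resp. `1`.
-/

open Filter Set Function Topology
open Real goldenRatio

section MonotoneIteration

variable {α : Type*} [ConditionallyCompleteLinearOrder α] [TopologicalSpace α] [OrderTopology α]
  {f : α → α} {c d x₀ : α}

theorem tendsto_iterate_of_map_le (hf : Continuous f) (hmaps : MapsTo f (Ico c d) (Ici c))
    (hle : ∀ x ∈ Ico c d, f x ≤ x) (hfix : ∀ x ∈ Ico c d, f x = x → x = c)
    (hx₀ : x₀ ∈ Ico c d) : Tendsto (fun n => f^[n] x₀) atTop (𝓝 c) := by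
  set u : ℕ → α := fun n => f^[n] x₀
  have hsucc (n : ℕ) : u (n + 1) = f (u n) := iterate_succ_apply' f n x₀
  have hmem (n : ℕ) : u n ∈ Ico c d := by
    induction n with
    | zero => exact hx₀
    | succ n ih => exact hsucc n ▸ ⟨hmaps ih, (hle _ ih).trans_lt ih.2⟩
  have hanti : Antitone u := antitone_nat_of_succ_le fun n => hsucc n ▸ hle _ (hmem n)
  have hbdd : BddBelow (range u) := ⟨c, forall_mem_range.2 fun n => (hmem n).1⟩
  have hlim := tendsto_atTop_ciInf hanti hbdd
  have hL : ⨅ n, u n ∈ Ico c d := ⟨le_ciInf fun n => (hmem n).1, (ciInf_le hbdd 0).trans_lt hx₀.2⟩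
  rwa [hfix _ hL (isFixedPt_of_tendsto_iterate hlim hf.continuousAt)] at hlim

theorem tendsto_iterate_of_le_map (hf : Continuous f) (hmaps : MapsTo f (Ioc c d) (Iic d))
    (hle : ∀ x ∈ Ioc c d, x ≤ f x) (hfix : ∀ x ∈ Ioc c d, f x = x → x = d)
    (hx₀ : x₀ ∈ Ioc c d) : Tendsto (fun n => f^[n] x₀) atTop (𝓝 d) :=
  tendsto_iterate_of_map_le (α := αᵒᵈ) (c := OrderDual.toDual d) (d := OrderDual.toDual c) hf
    (fun _ hx => hmaps ⟨hx.2, hx.1⟩) (fun x hx => hle x ⟨hx.2, hx.1⟩)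
    (fun x hx => hfix x ⟨hx.2, hx.1⟩) ⟨hx₀.2, hx₀.1⟩

end MonotoneIteration

theorem mapsTo_one_sub_sq : MapsTo (fun x : ℝ => (1 - x) ^ 2) (Icc 0 1) (Icc 0 1) :=
  fun x hx => ⟨sq_nonneg _, pow_le_one₀ (by linarith [hx.2]) (by linarith [hx.1])⟩

theorem goldenConj_sq_eq_three_sub_sqrt_five_div_two : ψ ^ 2 = (3 - √5) / 2 := by
  rw [goldenConj_sq]; ring

theorem sub_goldenConj_sq_mul_sub_goldenRatio_sq (x : ℝ) :
    (x - ψ ^ 2) * (x - φ ^ 2) = x ^ 2 - 3 * x + 1 := by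
  linear_combination ((3 + √5 ^ 2) / 16 - x / 2) * Real.sq_sqrt (show (0:ℝ) ≤ 5 by norm_num)

theorem one_sub_one_sub_sq_sq_sub_self (x : ℝ) :
    (1 - (1 - x) ^ 2) ^ 2 - x = x * (x - 1) * ((x - ψ ^ 2) * (x - φ ^ 2)) := by
  rw [sub_goldenConj_sq_mul_sub_goldenRatio_sq]; ring

theorem one_lt_goldenRatio_sq : 1 < φ ^ 2 := by
  rw [goldenRatio_sq]; linarith [goldenRatio_pos]

theorem goldenConj_sq_mem_Ioo : ψ ^ 2 ∈ Ioo 0 1 := by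
  rw [goldenConj_sq]; exact ⟨by linarith [neg_one_lt_goldenConj], by linarith [goldenConj_neg]⟩

theorem setOf_one_sub_one_sub_sq_sq_eq_self :
    {x ∈ Icc (0:ℝ) 1 | (1 - (1 - x) ^ 2) ^ 2 = x} = {0, ψ ^ 2, 1} := by
  ext x
  simp only [mem_ofPred_eq, mem_insert_iff, mem_singleton_iff, ← sub_eq_zero (a := (_ : ℝ) ^ 2),
    one_sub_one_sub_sq_sq_sub_self, mul_eq_zero, sub_eq_zero]
  constructor
  · rintro ⟨hx, (rfl | rfl) | rfl | rfl⟩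
    exacts [.inl rfl, .inr (.inr rfl), .inr (.inl rfl), absurd hx.2 one_lt_goldenRatio_sq.not_ge]
  · rintro (rfl | rfl | rfl)
    exacts [⟨left_mem_Icc.2 zero_le_one, .inl (.inl rfl)⟩,
      ⟨Ioo_subset_Icc_self goldenConj_sq_mem_Ioo, .inr (.inl rfl)⟩,
      ⟨right_mem_Icc.2 zero_le_one, .inl (.inr rfl)⟩]

theorem one_sub_one_sub_sq_sq_le_self {x : ℝ} (h₀ : 0 ≤ x) (h : x ≤ ψ ^ 2) :
    (1 - (1 - x) ^ 2) ^ 2 ≤ x := by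
  have hsign : x * (x - ψ ^ 2) * ((x - 1) * (x - φ ^ 2)) ≤ 0 :=
    mul_nonpos_of_nonpos_of_nonneg (mul_nonpos_of_nonneg_of_nonpos h₀ (by linarith))
      (mul_nonneg_of_nonpos_of_nonpos (by linarith [goldenConj_sq_mem_Ioo.2])
        (by linarith [goldenConj_sq_mem_Ioo.2, one_lt_goldenRatio_sq]))
  linarith [one_sub_one_sub_sq_sq_sub_self x]

theorem le_one_sub_one_sub_sq_sq {x : ℝ} (h : ψ ^ 2 ≤ x) (h₁ : x ≤ 1) :
    x ≤ (1 - (1 - x) ^ 2) ^ 2 := by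
  have hsign : 0 ≤ x * (x - ψ ^ 2) * ((x - 1) * (x - φ ^ 2)) :=
    mul_nonneg (mul_nonneg (by linarith [goldenConj_sq_mem_Ioo.1]) (by linarith))
      (mul_nonneg_of_nonpos_of_nonpos (by linarith) (by linarith [one_lt_goldenRatio_sq]))
  linarith [one_sub_one_sub_sq_sq_sub_self x]

theorem h_squared_dynamics :
    ({x ∈ Set.Icc (0:ℝ) 1 | (fun x : ℝ => (1-x)^2) ((fun x : ℝ => (1-x)^2) x) = x}
      = {0, (3 - Real.sqrt 5)/2, 1}) ∧
    (∀ x₀ ∈ Set.Ico (0:ℝ) ((3 - Real.sqrt 5)/2),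
      Filter.Tendsto (fun n => ((fun x : ℝ => (1-x)^2) ∘ (fun x : ℝ => (1-x)^2))^[n] x₀)
        Filter.atTop (nhds 0)) ∧
    (∀ x₀ ∈ Set.Ioc ((3 - Real.sqrt 5)/2) (1:ℝ),
      Filter.Tendsto (fun n => ((fun x : ℝ => (1-x)^2) ∘ (fun x : ℝ => (1-x)^2))^[n] x₀)
        Filter.atTop (nhds 1)) := by
  rw [← goldenConj_sq_eq_three_sub_sqrt_five_div_two]
  have hψ := goldenConj_sq_mem_Ioo
  have hlow : Ico 0 (ψ ^ 2) ⊆ Icc 0 1 := Ico_subset_Icc_self.trans (Icc_subset_Icc_right hψ.2.le)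
  have hhigh : Ioc (ψ ^ 2) 1 ⊆ Icc 0 1 := Ioc_subset_Icc_self.trans (Icc_subset_Icc_left hψ.1.le)
  have hfix (x : ℝ) (hx : x ∈ Icc 0 1) (h : (1 - (1 - x) ^ 2) ^ 2 = x) :
      x = 0 ∨ x = ψ ^ 2 ∨ x = 1 :=
    setOf_one_sub_one_sub_sq_sq_eq_self.subset ⟨hx, h⟩
  have hcont : Continuous ((fun x : ℝ => (1 - x) ^ 2) ∘ fun x => (1 - x) ^ 2) := by fun_prop
  have hmaps := mapsTo_one_sub_sq.comp mapsTo_one_sub_sq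
  refine ⟨setOf_one_sub_one_sub_sq_sq_eq_self, fun x₀ hx₀ => ?_, fun x₀ hx₀ => ?_⟩
  · refine tendsto_iterate_of_map_le hcont (fun x hx => (hmaps (hlow hx)).1)
      (fun x hx => one_sub_one_sub_sq_sq_le_self hx.1 hx.2.le) (fun x hx h => ?_) hx₀
    obtain rfl | rfl | rfl := hfix x (hlow hx) h
    all_goals first | rfl | linarith [hx.2, hψ.2]
  · refine tendsto_iterate_of_le_map hcont (fun x hx => (hmaps (hhigh hx)).2)
      (fun x hx => le_one_sub_one_sub_sq_sq hx.1.le hx.2) (fun x hx h => ?_) hx₀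
    obtain rfl | rfl | rfl := hfix x (hhigh hx) h
    all_goals first | rfl | linarith [hx.1, hψ.1]
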